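/- Blow-up of the smoothing effect constant at the critical exponent: let N ≥ 3 and m_c = (N-2)/N. For each m ∈ (m_c, 1) let C(m) > 0 be chosen so that the fast diffusion Barenblatt profile F_m(y) = (C(m) + k|y|²)^{-1/(1-m)} has unit mass, ∫_{ℝ^N} F_m(y) dy = 1, and let K(m) = F_m(0) = C(m)^{-1/(1-m)} be its maximum. Then lim_{m→m_c⁺} (m - m_c) · log K(m) / log(1/(m - m_c)) = (N-2)/N. -/

import Mathlib

open MeasureTheory Real Filter Topology Set

noncomputable section

/-- Self-similarity exponent `β = 1/(2-N(1-m))` of the fast diffusion Barenblatt solution. -/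
def fdeBeta (N : ℕ) (m : ℝ) : ℝ := 1 / (2 - N * (1 - m))

/-- The constant `k = β(1-m)/(2m)`. -/
def fdeK (N : ℕ) (m : ℝ) : ℝ := fdeBeta N m * (1 - m) / (2 * m)

/-- The fast diffusion Barenblatt profile `F(y) = (C + k|y|²)^{-1/(1-m)}`. -/
def fdeProfile (N : ℕ) (m C : ℝ) (y : EuclideanSpace ℝ (Fin N)) : ℝ :=
  (C + fdeK N m * ‖y‖ ^ 2) ^ (-(1 / (1 - m)))

/-!
Substituting `y = √(C/k) z` turns the unit-mass condition into `C^(p - N/2) k^(N/2) I(p) = 1`,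
where `p = 1/(1-m)` and `I(p) = ∫ (1 + |z|²)^(-p) dz`. Since `p - N/2 = N (m - m_c) p / 2`, taking
logarithms gives the exact identity
`(m - m_c) log K - (1 - 2/N) log (1/(m - m_c)) = -(2/N) log (I(p) (m - m_c)) + log (k (m - m_c))`.
Here `k (m - m_c) = (1-m)/(2mN)` has a positive limit, and in polar coordinates
`2^(-p) r^(-2p) 𝟙_{r > 1} ≤ (1 + r²)^(-p) ≤ min (1, r^(-2p))` shows that `I(p) (2p - N)` stays
between positive constants as `p ↓ N/2`. Both logarithms on the right are therefore bounded,
while `log (1/(m - m_c)) → ∞`.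
-/

def stepRpow (b c s r : ℝ) : ℝ := if r ≤ 1 then b else c * r ^ (-s)

section StepRpow

variable {N : ℕ} {s : ℝ} (b c : ℝ)

lemma pow_mul_stepRpow_of_one_lt (hN : 1 ≤ N) {r : ℝ} (hr : 1 < r) :
    r ^ (N - 1) * stepRpow b c s r = c * r ^ ((N : ℝ) - 1 - s) := by
  rw [stepRpow, if_neg hr.not_ge, ← rpow_natCast, Nat.cast_sub hN, Nat.cast_one,
    sub_eq_add_neg _ s, rpow_add (zero_lt_one.trans hr)]
  ring

lemma integrableOn_pow_mul_stepRpow (hN : 1 ≤ N) (hs : (N : ℝ) < s) :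
    IntegrableOn (fun r ↦ r ^ (N - 1) * stepRpow b c s r) (Ioi 0) := by
  rw [← Ioc_union_Ioi_eq_Ioi zero_le_one]
  refine IntegrableOn.union ?_ ?_
  · have : IntegrableOn (fun r : ℝ ↦ r ^ (N - 1) * b) (Icc 0 1) :=
      Continuous.integrableOn_Icc (by fun_prop)
    exact (this.mono_set Ioc_subset_Icc_self).congr_fun (fun r hr ↦ by simp [stepRpow, hr.2])
      measurableSet_Ioc
  · have : IntegrableOn (fun r : ℝ ↦ c * r ^ ((N : ℝ) - 1 - s)) (Ioi 1) :=
      (integrableOn_Ioi_rpow_of_lt (by linarith) zero_lt_one).const_mul c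
    exact this.congr_fun (fun r hr ↦ (pow_mul_stepRpow_of_one_lt b c hN hr).symm)
      measurableSet_Ioi

lemma integral_pow_mul_stepRpow (hN : 1 ≤ N) (hs : (N : ℝ) < s) :
    ∫ r in Ioi 0, r ^ (N - 1) * stepRpow b c s r = b / N + c / (s - N) := by
  have hint := integrableOn_pow_mul_stepRpow b c hN hs
  rw [← Ioc_union_Ioi_eq_Ioi zero_le_one] at hint ⊢
  rw [setIntegral_union Ioc_disjoint_Ioi_same measurableSet_Ioi (hint.mono_set subset_union_left)
    (hint.mono_set subset_union_right)]
  have hIoc : ∫ r in Ioc 0 1, r ^ (N - 1) * stepRpow b c s r = b / N := by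
    rw [setIntegral_congr_fun measurableSet_Ioc (g := fun r ↦ r ^ (N - 1) * b)
      (fun r hr ↦ by simp [stepRpow, hr.2]), ← intervalIntegral.integral_of_le zero_le_one,
      intervalIntegral.integral_mul_const, integral_pow, Nat.sub_add_cancel hN]
    simp [zero_pow (Nat.one_le_iff_ne_zero.mp hN), Nat.cast_sub hN, div_eq_inv_mul]
  have hIoi : ∫ r in Ioi 1, r ^ (N - 1) * stepRpow b c s r = c / (s - N) := by
    rw [setIntegral_congr_fun measurableSet_Ioi (fun r hr ↦ pow_mul_stepRpow_of_one_lt b c hN hr),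
      integral_const_mul, integral_Ioi_rpow_of_lt (by linarith) zero_lt_one, one_rpow,
      show (N : ℝ) - 1 - s + 1 = -(s - N) by ring, div_neg, neg_div, neg_neg, mul_one_div]
  rw [hIoc, hIoi]

lemma rpow_neg_one_add_sq_le_stepRpow {p r : ℝ} (hp : 0 ≤ p) (hr : 0 ≤ r) :
    (1 + r ^ 2) ^ (-p) ≤ stepRpow 1 1 (2 * p) r := by
  unfold stepRpow
  split_ifs with h
  · exact rpow_le_one_of_one_le_of_nonpos (by nlinarith) (by linarith)
  · rw [one_mul, ← mul_neg, rpow_mul hr, rpow_two]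
    exact rpow_le_rpow_of_nonpos (by nlinarith) (by linarith) (by linarith)

lemma stepRpow_le_rpow_neg_one_add_sq {p r : ℝ} (hp : 0 ≤ p) (hr : 0 ≤ r) :
    stepRpow 0 (2 ^ (-p)) (2 * p) r ≤ (1 + r ^ 2) ^ (-p) := by
  unfold stepRpow
  split_ifs with h
  · positivity
  · rw [← mul_neg, rpow_mul hr, rpow_two, ← mul_rpow zero_le_two (by positivity)]
    exact rpow_le_rpow_of_nonpos (by positivity) (by nlinarith) (by linarith)

end StepRpow

section HaarMeasure

variable {E : Type*} [NormedAddCommGroup E] [NormedSpace ℝ E] [FiniteDimensional ℝ E]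
  [MeasurableSpace E] [BorelSpace E] (μ : Measure E) [μ.IsAddHaarMeasure]

local notation "d" => Module.finrank ℝ E

lemma integrable_one_add_norm_sq_rpow_neg {p : ℝ} (hp : (d : ℝ) < 2 * p) :
    Integrable (fun x ↦ (1 + ‖x‖ ^ 2) ^ (-p)) μ := by
  simpa [neg_div] using integrable_rpow_neg_one_add_norm_sq (μ := μ) hp

lemma integral_rpow_neg_add_mul_norm_sq {C k : ℝ} (hC : 0 < C) (hk : 0 < k) (p : ℝ) :
    ∫ y, (C + k * ‖y‖ ^ 2) ^ (-p) ∂μ =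
      C ^ (-p) * √(C / k) ^ Module.finrank ℝ E * ∫ z, (1 + ‖z‖ ^ 2) ^ (-p) ∂μ := by
  have hfactor (y : E) : C + k * ‖y‖ ^ 2 = C * (1 + ‖(√(C / k))⁻¹ • y‖ ^ 2) := by
    rw [norm_smul, mul_pow, norm_inv, Real.norm_of_nonneg (sqrt_nonneg _), inv_pow,
      sq_sqrt (div_pos hC hk).le]
    field_simp
  calc ∫ y, (C + k * ‖y‖ ^ 2) ^ (-p) ∂μ
      = ∫ y, C ^ (-p) * (1 + ‖(√(C / k))⁻¹ • y‖ ^ 2) ^ (-p) ∂μ := by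
        congr with y
        rw [hfactor, mul_rpow hC.le (by positivity)]
    _ = _ := by
      rw [integral_const_mul, Measure.integral_comp_inv_smul_of_nonneg μ
        (fun z ↦ (1 + ‖z‖ ^ 2) ^ (-p)) (sqrt_nonneg _), smul_eq_mul, mul_assoc]

variable [Nontrivial E] {s : ℝ} (b c : ℝ)

lemma integrable_stepRpow_norm (hs : (d : ℝ) < s) :
    Integrable (fun x ↦ stepRpow b c s ‖x‖) μ :=
  (integrable_fun_norm_addHaar μ).2 (integrableOn_pow_mul_stepRpow b c Module.finrank_pos hs)

lemma integral_stepRpow_norm (hs : (d : ℝ) < s) :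
    ∫ x, stepRpow b c s ‖x‖ ∂μ = (b + c * d / (s - d)) * μ.real (Metric.ball 0 1) := by
  have hd : (d : ℝ) ≠ 0 := Nat.cast_ne_zero.2 Module.finrank_pos.ne'
  rw [integral_fun_norm_addHaar μ (fun r ↦ stepRpow b c s r)]
  simp only [smul_eq_mul, nsmul_eq_mul]
  rw [integral_pow_mul_stepRpow b c Module.finrank_pos hs]
  field_simp

lemma integral_one_add_norm_sq_rpow_neg_mul_le {p : ℝ} (hp : (d : ℝ) < 2 * p) :
    (∫ x, (1 + ‖x‖ ^ 2) ^ (-p) ∂μ) * (2 * p - d) ≤ 2 * p * μ.real (Metric.ball 0 1) := by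
  have hp0 : 0 ≤ p := by linarith [Nat.cast_nonneg (α := ℝ) d]
  have hmono := integral_mono (integrable_one_add_norm_sq_rpow_neg μ hp)
    (integrable_stepRpow_norm μ 1 1 hp)
    (fun x ↦ rpow_neg_one_add_sq_le_stepRpow hp0 (norm_nonneg x))
  rw [integral_stepRpow_norm μ 1 1 hp] at hmono
  have hpd : 0 < 2 * p - d := by linarith
  calc (∫ x, (1 + ‖x‖ ^ 2) ^ (-p) ∂μ) * (2 * p - d)
      ≤ (1 + 1 * d / (2 * p - d)) * μ.real (Metric.ball 0 1) * (2 * p - d) := by gcongr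
    _ = 2 * p * μ.real (Metric.ball 0 1) := by field_simp; ring

lemma le_integral_one_add_norm_sq_rpow_neg_mul {p : ℝ} (hp : (d : ℝ) < 2 * p) :
    2 ^ (-p) * d * μ.real (Metric.ball 0 1) ≤ (∫ x, (1 + ‖x‖ ^ 2) ^ (-p) ∂μ) * (2 * p - d) := by
  have hp0 : 0 ≤ p := by linarith [Nat.cast_nonneg (α := ℝ) d]
  have hmono := integral_mono (integrable_stepRpow_norm μ 0 (2 ^ (-p)) hp)
    (integrable_one_add_norm_sq_rpow_neg μ hp)
    (fun x ↦ stepRpow_le_rpow_neg_one_add_sq hp0 (norm_nonneg x))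
  rw [integral_stepRpow_norm μ 0 _ hp] at hmono
  have hpd : 0 < 2 * p - d := by linarith
  calc 2 ^ (-p) * d * μ.real (Metric.ball 0 1)
      = (0 + 2 ^ (-p) * d / (2 * p - d)) * μ.real (Metric.ball 0 1) * (2 * p - d) := by
        rw [zero_add, div_mul_eq_mul_div, div_mul_cancel₀ _ hpd.ne']
    _ ≤ _ := by gcongr

end HaarMeasure

section Asymptotics

variable {α : Type*} {l : Filter α}

lemma tendsto_div_of_sub_mul_isBigO_one {f g : α → ℝ} {c : ℝ} (hg : Tendsto g l atTop)
    (h : (fun x ↦ f x - c * g x) =O[l] (fun _ ↦ (1 : ℝ))) :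
    Tendsto (fun x ↦ f x / g x) l (𝓝 c) := by
  have hrem : Tendsto (fun x ↦ (f x - c * g x) / g x) l (𝓝 0) := by
    have := (h.mul (Asymptotics.isBigO_refl (fun x ↦ (g x)⁻¹) l)).trans_tendsto
      (by simp only [one_mul]; exact tendsto_inv_atTop_zero.comp hg)
    simpa [div_eq_mul_inv] using this
  refine (by simpa using hrem.const_add c : Tendsto _ l (𝓝 c)).congr' ?_
  filter_upwards [hg.eventually_gt_atTop 0] with x hx
  field_simp
  ring

lemma isBigO_one_log_of_mem_Icc {u : α → ℝ} {a b : ℝ} (ha : 0 < a)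
    (h : ∀ᶠ x in l, u x ∈ Icc a b) : (fun x ↦ log (u x)) =O[l] (fun _ ↦ (1 : ℝ)) :=
  Asymptotics.IsBigO.of_bound (max |log a| |log b|) <| h.mono fun x hx ↦ by
    simpa using abs_le_max_abs_abs (log_le_log ha hx.1) (log_le_log (ha.trans_le hx.1) hx.2)

lemma tendsto_log_one_div_sub_nhdsGT (a : ℝ) :
    Tendsto (fun x ↦ log (1 / (x - a))) (𝓝[>] a) atTop := by
  have := (tendsto_map : Tendsto (· - a) (𝓝[>] a) _)
  rw [Filter.map_subRight_nhdsGT, sub_self] at this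
  simp only [one_div]
  exact tendsto_log_atTop.comp this.inv_tendsto_nhdsGT_zero

end Asymptotics

section FastDiffusion

variable {N : ℕ} {m : ℝ}

lemma fde_two_mul_exponent_sub (hN : N ≠ 0) (hm : m ≠ 1) :
    2 * (1 / (1 - m)) - N = N * (m - (N - 2) / N) * (1 / (1 - m)) := by
  field_simp
  ring

lemma fdeK_mul_sub_critical (hN : N ≠ 0) (hm : m ≠ 0) (hmc : m ≠ (N - 2) / N) :
    fdeK N m * (m - (N - 2) / N) = (1 - m) / (2 * m * N) := by
  have hgap : 2 - N * (1 - m) = N * (m - (N - 2) / N) := by field_simp; ring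
  have ht : m - (N - 2) / N ≠ 0 := sub_ne_zero.2 hmc
  rw [fdeK, fdeBeta, hgap]
  generalize m - (N - 2) / N = t at ht ⊢
  field_simp

lemma fde_log_identity_of_unit_mass (hN : 2 ≤ N) (hm : (N - 2) / N < m) (hm1 : m < 1) {C : ℝ}
    (hC : 0 < C) (hmass : ∫ y, fdeProfile N m C y = 1) :
    (m - (N - 2) / N) * log (C ^ (-(1 / (1 - m)))) - (N - 2) / N * log (1 / (m - (N - 2) / N)) =
      -(2 / N) * log ((∫ z : EuclideanSpace ℝ (Fin N), (1 + ‖z‖ ^ 2) ^ (-(1 / (1 - m)))) *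
        (m - (N - 2) / N)) + log ((1 - m) / (2 * m * N)) := by
  set t := m - (N - 2) / N
  set p := 1 / (1 - m)
  set I := ∫ z : EuclideanSpace ℝ (Fin N), (1 + ‖z‖ ^ 2) ^ (-p)
  have ht : 0 < t := sub_pos.2 hm
  have hN2 : (2 : ℝ) ≤ N := by exact_mod_cast hN
  have hm0 : 0 < m := lt_of_le_of_lt (div_nonneg (by linarith) (by positivity)) hm
  have hkt := fdeK_mul_sub_critical (N := N) (by omega) hm0.ne' hm.ne'
  have hk : 0 < fdeK N m :=
    pos_of_mul_pos_left (hkt ▸ div_pos (by linarith) (by positivity)) ht.le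
  have hscale : C ^ (-p) * √(C / fdeK N m) ^ N * I = 1 := by
    have := integral_rpow_neg_add_mul_norm_sq (volume : Measure (EuclideanSpace ℝ (Fin N))) hC hk p
    rw [finrank_euclideanSpace_fin] at this
    rw [← this, ← hmass]
    rfl
  have hI : I ≠ 0 := fun h ↦ by simp [h] at hscale
  have hlog : -p * log C + N * ((log C - log (fdeK N m)) / 2) + log I = 0 := by
    have := congrArg log hscale
    rwa [log_mul (by positivity) hI, log_mul (by positivity) (by positivity), log_rpow hC,
      log_pow, log_sqrt (by positivity), log_div hC.ne' hk.ne', log_one] at this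
  have hexp := fde_two_mul_exponent_sub (N := N) (by omega) hm1.ne
  rw [log_rpow hC, one_div t, log_inv, log_mul hI ht.ne', ← hkt, log_mul hk.ne' ht.ne']
  linear_combination (norm := skip) (2 / N) * hlog + (log C / N) * hexp
  simp only [t, p]
  field_simp
  ring

lemma fde_integral_mul_sub_critical_mem_Icc (hN : N ≠ 0) (hm : (N - 2) / N < m)
    (hm' : m ≤ 1 - 1 / N) :
    (∫ z : EuclideanSpace ℝ (Fin N), (1 + ‖z‖ ^ 2) ^ (-(1 / (1 - m)))) * (m - (N - 2) / N) ∈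
      Icc (2 ^ (-(N : ℝ)) * volume.real (Metric.ball (0 : EuclideanSpace ℝ (Fin N)) 1) / N)
        (2 * volume.real (Metric.ball (0 : EuclideanSpace ℝ (Fin N)) 1) / N) := by
  have : NeZero N := ⟨hN⟩
  set V := volume.real (Metric.ball (0 : EuclideanSpace ℝ (Fin N)) 1)
  set t := m - (N - 2) / N
  set p := 1 / (1 - m)
  set I := ∫ z : EuclideanSpace ℝ (Fin N), (1 + ‖z‖ ^ 2) ^ (-p)
  have ht : 0 < t := sub_pos.2 hm
  have h1m : 1 / (N : ℝ) ≤ 1 - m := by linarith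
  have h1m' : 0 < 1 - m := (by positivity : (0 : ℝ) < 1 / N).trans_le h1m
  have hp : 0 < p := one_div_pos.2 h1m'
  have hpN : p ≤ N := by
    rw [div_le_iff₀ (by positivity)] at h1m
    exact (div_le_iff₀ h1m').2 (by linarith)
  have hexp : 2 * p - N = N * t * p := fde_two_mul_exponent_sub hN (by linarith : m < 1).ne
  have h2p : (Module.finrank ℝ (EuclideanSpace ℝ (Fin N)) : ℝ) < 2 * p := by
    rw [finrank_euclideanSpace_fin]
    linarith [mul_pos (mul_pos (by positivity : (0 : ℝ) < N) ht) hp]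
  have hupper := integral_one_add_norm_sq_rpow_neg_mul_le volume h2p
  have hlower := le_integral_one_add_norm_sq_rpow_neg_mul volume h2p
  rw [finrank_euclideanSpace_fin, hexp] at hupper hlower
  constructor
  · calc 2 ^ (-(N : ℝ)) * V / N ≤ 2 ^ (-p) * V / p := by gcongr; exact one_le_two
      _ ≤ I * t := by
          rw [div_le_iff₀ hp]
          nlinarith
  · rw [le_div_iff₀ (by positivity)]
    nlinarith

end FastDiffusion

/-- Blow-up of the smoothing effect constant at the critical exponent
`m_c = (N-2)/N`, `N ≥ 3`: if `C(m) > 0` normalizes the Barenblatt profile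
`F_m` to unit mass and `K(m) = F_m(0) = C(m)^{-1/(1-m)}` is its maximum, then
`(m-m_c) log K(m) / log(1/(m-m_c)) → (N-2)/N` as `m → m_c⁺`. -/
theorem fde_smoothing_constant_blowup (N : ℕ) (hN : 3 ≤ N)
    (mc : ℝ) (hmc : mc = ((N : ℝ) - 2) / N)
    (C : ℝ → ℝ) (hCpos : ∀ m, mc < m → m < 1 → 0 < C m)
    (hmass : ∀ m, mc < m → m < 1 → ∫ y, fdeProfile N m (C m) y = 1)
    (K : ℝ → ℝ) (hK : ∀ m, K m = C m ^ (-(1 / (1 - m)))) :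
    Tendsto (fun m => (m - mc) * Real.log (K m) / Real.log (1 / (m - mc)))
      (𝓝[>] mc) (𝓝 (((N : ℝ) - 2) / N)) := by
  have : NeZero N := ⟨by omega⟩
  have hN3 : (3 : ℝ) ≤ N := by exact_mod_cast hN
  have hV : 0 < volume.real (Metric.ball (0 : EuclideanSpace ℝ (Fin N)) 1) :=
    ENNReal.toReal_pos (Metric.measure_ball_pos volume _ one_pos).ne' measure_ball_lt_top.ne
  have hmc_pos : 0 < mc := hmc ▸ div_pos (by linarith) (by positivity)
  have hmc_lt : mc < 1 - 1 / N := by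
    rw [hmc, sub_div, div_self (by positivity)]; gcongr; norm_num
  have hnear : Ioo mc (1 - 1 / N) ∈ 𝓝[>] mc := Ioo_mem_nhdsGT hmc_lt
  have hI := isBigO_one_log_of_mem_Icc (l := 𝓝[>] mc) (by positivity) <| mem_of_superset hnear
    fun m hm ↦ fde_integral_mul_sub_critical_mem_Icc (by omega) (hmc ▸ hm.1) hm.2.le
  have hk : (fun m ↦ log ((1 - m) / (2 * m * N))) =O[𝓝[>] mc] (fun _ ↦ (1 : ℝ)) := by
    have hcont : ContinuousAt (fun m : ℝ ↦ log ((1 - m) / (2 * m * N))) mc :=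
      ContinuousAt.log (by fun_prop (disch := positivity))
        (div_pos (by linarith [one_div_pos.2 (by positivity : (0:ℝ) < N)]) (by positivity)).ne'
    exact (hcont.tendsto.mono_left nhdsWithin_le_nhds).isBigO_one ℝ
  refine tendsto_div_of_sub_mul_isBigO_one (tendsto_log_one_div_sub_nhdsGT mc)
    (((hI.const_mul_left (-(2 / N))).add hk).congr' ?_ EventuallyEq.rfl)
  filter_upwards [hnear] with m ⟨hm, hm1⟩
  have hm1' : m < 1 := hm1.trans_le (by linarith [one_div_pos.2 (by positivity : (0:ℝ) < N)])
  subst hmc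
  rw [hK, fde_log_identity_of_unit_mass (by omega) hm hm1' (hCpos m hm hm1') (hmass m hm hm1')]
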